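/- Suppose the controls are constant, κᵖ(t) ≡ κᵖ > 0 and κᶜ(t) ≡ κᶜ with |κᶜ| < ν √(κᵖ γ_m). If u is a solution of the relative guidance-by-repulsion equation on [0,∞) with u(t) ≠ 0 for all t ≥ 0, then there exist constants 0 < c ≤ C < ∞ such that c ≤ |u(t)| ≤ C for all t ≥ 0, and moreover |u'(t)| is uniformly bounded in time. -/

import Mathlib

open Real Filter MeasureTheory intervalIntegral
open scoped RealInnerProductSpace Topology

noncomputable section

/-- Perpendicular rotation in the plane: `(a, b)^⊥ = (-b, a)`. -/
def perp (w : EuclideanSpace ℝ (Fin 2)) : EuclideanSpace ℝ (Fin 2) :=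
  (WithLp.equiv 2 (Fin 2 → ℝ)).symm ![-(w 1), w 0]

/-- The relative guidance-by-repulsion equation
`u'' + (κᵖ(t) f_d(|u|) − f_e(|u|)) u + ν u' = κᶜ(t) u^⊥` holds at time `t`. -/
def SolvesRel (fd fe : ℝ → ℝ) (ν : ℝ) (κp κc : ℝ → ℝ)
    (u : ℝ → EuclideanSpace ℝ (Fin 2)) (t : ℝ) : Prop :=
  deriv (deriv u) t + (κp t * fd ‖u t‖ - fe ‖u t‖) • u t + ν • deriv u t
    = κc t • perp (u t)

/-! With constant controls the equation is autonomous, with central force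
`F(r) = κᵖ f_d(r) - f_e(r)` and potential `Φ(r) = ∫_{r_p}^r s F(s) ds`. Adding the cross term
`-(κᶜ/ν) ⟪u^⊥, u'⟫` to the energy `½|u'|² + Φ(|u|)` gives a Lyapunov function, with derivative
`-|ν u' - κᶜ u^⊥|² / ν` along solutions. By Young's inequality it dominates
`(1-θ)/2 |u'|² + Q(|u|)`, `Q(r) = Φ(r) - κᶜ²/(2θν²) r²`, for every `θ > 0`. Taking `θ < 1` with
`κᶜ² < θ ν² κᵖ γ_m`, `Q` tends to `+∞` both at `0` (the repulsion `r f_e(r)` is not integrable)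
and at `∞` (`F → κᵖ γ_m`), so the bounded Lyapunov function confines `|u|` to a compact
subinterval of `(0, ∞)` and then bounds `|u'|`.
-/

open Set

local notation "ℝ²" => EuclideanSpace ℝ (Fin 2)

lemma inner_perp_self (w : ℝ²) : ⟪perp w, w⟫ = 0 := by
  simp [PiLp.inner_apply, Fin.sum_univ_two, perp]
  ring

lemma norm_perp (w : ℝ²) : ‖perp w‖ = ‖w‖ := by
  simp [EuclideanSpace.norm_eq, Fin.sum_univ_two, perp, add_comm]

def perpCLM : ℝ² →L[ℝ] ℝ² :=
  LinearMap.toContinuousLinearMap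
    { toFun := perp
      map_add' := fun x y => by ext i; fin_cases i <;> simp [perp, add_comm]
      map_smul' := fun c x => by ext i; fin_cases i <;> simp [perp] }

lemma HasDerivAt.perp {f : ℝ → ℝ²} {f' : ℝ²} {t : ℝ} (h : HasDerivAt f f' t) :
    HasDerivAt (fun s => perp (f s)) (perp f') t :=
  perpCLM.hasFDerivAt.comp_hasDerivAt t h

lemma real_inner_le_young {E : Type*} [NormedAddCommGroup E] [InnerProductSpace ℝ E]
    (x y : E) {θ : ℝ} (hθ : 0 < θ) : ⟪x, y⟫ ≤ θ / 2 * ‖x‖ ^ 2 + ‖y‖ ^ 2 / (2 * θ) := by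
  have key : θ / 2 * ‖x‖ ^ 2 + ‖y‖ ^ 2 / (2 * θ) - ⟪x, y⟫ = ‖θ • x - y‖ ^ 2 / (2 * θ) := by
    rw [norm_sub_sq_real, norm_smul, real_inner_smul_left, Real.norm_of_nonneg hθ.le]
    field_simp
    ring
  linarith [show 0 ≤ ‖θ • x - y‖ ^ 2 / (2 * θ) by positivity]

lemma HasDerivAt.norm {E : Type*} [NormedAddCommGroup E] [InnerProductSpace ℝ E]
    {f : ℝ → E} {f' : E} {t : ℝ} (hf : HasDerivAt f f' t) (h0 : f t ≠ 0) :
    HasDerivAt (fun s => ‖f s‖) (⟪f t, f'⟫ / ‖f t‖) t := by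
  have h := hf.norm_sq.sqrt (by positivity)
  simp only [Real.sqrt_sq (norm_nonneg _)] at h
  convert h using 1
  field_simp

lemma intervalIntegrable_of_continuousOn_Ioi {f : ℝ → ℝ} (hf : ContinuousOn f (Ioi 0))
    {a b : ℝ} (ha : 0 < a) (hb : 0 < b) : IntervalIntegrable f volume a b :=
  (hf.mono fun _ hx => (lt_min ha hb).trans_le hx.1).intervalIntegrable

lemma tendsto_intervalIntegral_nhdsGT_zero_atTop {f : ℝ → ℝ} {b : ℝ}
    (hf : ContinuousOn f (Ioi 0)) (hf₀ : ∀ x ∈ Ioc 0 b, 0 ≤ f x)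
    (hdiv : ¬ IntegrableOn f (Ioc 0 b)) :
    Tendsto (fun a => ∫ x in a..b, f x) (𝓝[>] 0) atTop := by
  have hb : 0 < b := by
    by_contra! hb
    exact hdiv (by simp [Ioc_eq_empty_of_le hb])
  refine tendsto_atTop.2 fun M => ?_
  obtain ⟨x₀, hx₀, hM⟩ : ∃ x₀ ∈ Ioc 0 b, M ≤ ∫ x in x₀..b, f x := by
    by_contra! h
    have ha : ∀ n : ℕ, b / (n + 1) ∈ Ioc 0 b := fun n =>
      ⟨by positivity, div_le_self hb.le (by linarith [n.cast_nonneg (α := ℝ)])⟩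
    refine hdiv (integrableOn_Ioc_of_intervalIntegral_norm_bounded_left (l := atTop) (I := M)
      (fun n => ((hf.mono fun _ hx => (ha n).1.trans_le hx.1).integrableOn_Icc).mono_set
        Ioc_subset_Icc_self)
      (tendsto_const_nhds.div_atTop (tendsto_natCast_atTop_atTop.atTop_add tendsto_const_nhds))
      (Eventually.of_forall fun n => ?_))
    rw [← integral_of_le (ha n).2]
    refine (le_of_eq (integral_congr fun x hx => ?_)).trans (h _ (ha n)).le
    rw [uIcc_of_le (ha n).2] at hx
    exact Real.norm_of_nonneg (hf₀ x ⟨(ha n).1.trans_le hx.1, hx.2⟩)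
  refine (nhdsGT_basis 0).eventually_iff.2 ⟨x₀, hx₀.1, fun a ha => ?_⟩
  rw [← integral_add_adjacent_intervals (b := x₀)
    (intervalIntegrable_of_continuousOn_Ioi hf ha.1 hx₀.1)
    (intervalIntegrable_of_continuousOn_Ioi hf hx₀.1 hb)]
  have : 0 ≤ ∫ x in a..x₀, f x :=
    integral_nonneg ha.2.le fun x hx => hf₀ x ⟨ha.1.trans_le hx.1, hx.2.trans hx₀.2⟩
  linarith

def radialPotential (F : ℝ → ℝ) (r₀ r : ℝ) : ℝ := ∫ s in r₀..r, s * F s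

lemma hasDerivAt_radialPotential {F : ℝ → ℝ} (hF : ContinuousOn F (Ioi 0)) {r₀ r : ℝ}
    (hr₀ : 0 < r₀) (hr : 0 < r) : HasDerivAt (radialPotential F r₀) (r * F r) r :=
  have hsF : ContinuousOn (fun s => s * F s) (Ioi 0) := continuousOn_id.mul hF
  integral_hasDerivAt_right (intervalIntegrable_of_continuousOn_Ioi hsF hr₀ hr)
    (hsF.stronglyMeasurableAtFilter isOpen_Ioi r hr) (hsF.continuousAt (Ioi_mem_nhds hr))

lemma tendsto_radialPotential_sub_nhdsGT_zero {G H : ℝ → ℝ} {r₀ C : ℝ} (c : ℝ) (hr₀ : 0 < r₀)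
    (hG : ContinuousOn G (Ioi 0)) (hGC : ∀ s ∈ Ioc 0 r₀, G s ≤ C)
    (hH : ContinuousOn H (Ioi 0)) (hH₀ : ∀ s ∈ Ioc 0 r₀, 0 ≤ H s)
    (hdiv : ¬ IntegrableOn (fun s => s * H s) (Ioc 0 r₀)) :
    Tendsto (fun r => radialPotential (fun s => G s - H s) r₀ r - c * r ^ 2) (𝓝[>] 0) atTop := by
  have hsG : ContinuousOn (fun s => s * G s) (Ioi 0) := continuousOn_id.mul hG
  have hsH : ContinuousOn (fun s => s * H s) (Ioi 0) := continuousOn_id.mul hH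
  have hG_le : ∀ r ∈ Ioo 0 r₀, ∫ s in r..r₀, s * G s ≤ |C| * r₀ ^ 2 / 2 := by
    intro r hr
    have hmono : ∫ s in r..r₀, s * G s ≤ ∫ s in r..r₀, s * C :=
      integral_mono_on hr.2.le (intervalIntegrable_of_continuousOn_Ioi hsG hr.1 hr₀)
        ((continuous_id.mul continuous_const).intervalIntegrable _ _) fun s hs =>
          mul_le_mul_of_nonneg_left (hGC s ⟨hr.1.trans_le hs.1, hs.2⟩) (hr.1.le.trans hs.1)
    rw [intervalIntegral.integral_mul_const, integral_id] at hmono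
    have hr2 : 0 ≤ r₀ ^ 2 - r ^ 2 := by nlinarith [hr.1, hr.2]
    nlinarith [mul_le_mul_of_nonneg_left (le_abs_self C) hr2, abs_nonneg C, sq_nonneg r]
  have hsplit : ∀ r ∈ Ioo 0 r₀, radialPotential (fun s => G s - H s) r₀ r =
      -(∫ s in r..r₀, s * G s) + ∫ s in r..r₀, s * H s := by
    intro r hr
    simp only [radialPotential, mul_sub]
    rw [intervalIntegral.integral_sub (intervalIntegrable_of_continuousOn_Ioi hsG hr₀ hr.1)
      (intervalIntegrable_of_continuousOn_Ioi hsH hr₀ hr.1), integral_symm r, integral_symm r]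
    ring
  have hnear : ∀ᶠ r in 𝓝[>] 0, r ∈ Ioo 0 r₀ := (nhdsGT_basis 0).mem_of_mem hr₀
  have hΦ : Tendsto (radialPotential (fun s => G s - H s) r₀) (𝓝[>] 0) atTop :=
    (tendsto_atTop_add_left_of_le' _ (-(|C| * r₀ ^ 2 / 2))
      (hnear.mono fun r hr => neg_le_neg (hG_le r hr))
      (tendsto_intervalIntegral_nhdsGT_zero_atTop hsH
        (fun s hs => mul_nonneg hs.1.le (hH₀ s hs)) hdiv)).congr'
      (hnear.mono fun r hr => (hsplit r hr).symm)
  have hsq : Tendsto (fun r : ℝ => c * r ^ 2) (𝓝[>] 0) (𝓝 0) :=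
    ((continuous_const.mul (continuous_pow 2)).tendsto' 0 0 (by simp)).mono_left
      nhdsWithin_le_nhds
  exact (hΦ.atTop_add hsq.neg).congr fun r => (sub_eq_add_neg _ _).symm

lemma tendsto_radialPotential_sub_atTop {F : ℝ → ℝ} (hF : ContinuousOn F (Ioi 0)) {r₀ L c : ℝ}
    (hr₀ : 0 < r₀) (hlim : Tendsto F atTop (𝓝 L)) (hc : 2 * c < L) :
    Tendsto (fun r => radialPotential F r₀ r - c * r ^ 2) atTop atTop := by
  set d := (L - 2 * c) / 2
  have hd : 0 < d := by simp only [d]; linarith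
  obtain ⟨R₀, hR₀⟩ := eventually_atTop.1 (hlim.eventually (eventually_gt_nhds
    (show 2 * c + d < L by simp only [d]; linarith)))
  set R := max R₀ r₀
  have hR : 0 < R := hr₀.trans_le (le_max_right _ _)
  have hsF : ContinuousOn (fun s => s * F s) (Ioi 0) := continuousOn_id.mul hF
  have hgrowth : ∀ r ≥ R, radialPotential F r₀ R - c * R ^ 2 - d * R ^ 2 / 2 + d / 2 * r ^ 2 ≤
      radialPotential F r₀ r - c * r ^ 2 := by
    intro r hr
    have hmono : ∫ s in R..r, s * (2 * c + d) ≤ ∫ s in R..r, s * F s :=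
      integral_mono_on hr ((continuous_id.mul continuous_const).intervalIntegrable _ _)
        (intervalIntegrable_of_continuousOn_Ioi hsF hR (hR.trans_le hr)) fun s hs =>
          mul_le_mul_of_nonneg_left (hR₀ s ((le_max_left _ _).trans hs.1)).le
            (hR.le.trans hs.1)
    rw [intervalIntegral.integral_mul_const, integral_id] at hmono
    have hadd : radialPotential F r₀ R + ∫ s in R..r, s * F s = radialPotential F r₀ r :=
      integral_add_adjacent_intervals (intervalIntegrable_of_continuousOn_Ioi hsF hr₀ hR)
        (intervalIntegrable_of_continuousOn_Ioi hsF hR (hR.trans_le hr))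
    nlinarith
  exact tendsto_atTop_mono' atTop ((eventually_ge_atTop R).mono hgrowth)
    (tendsto_atTop_add_const_left _ _
      ((tendsto_pow_atTop two_ne_zero).const_mul_atTop (by positivity)))

def modifiedEnergy (Φ : ℝ → ℝ) (ν κ : ℝ) (u : ℝ → ℝ²) (t : ℝ) : ℝ :=
  ‖deriv u t‖ ^ 2 / 2 + Φ ‖u t‖ - κ / ν * ⟪perp (u t), deriv u t⟫

section

variable {F Φ : ℝ → ℝ} {ν κ : ℝ} {u : ℝ → ℝ²}

lemma hasDerivAt_modifiedEnergy {t : ℝ} (hν : ν ≠ 0) (hu : DifferentiableAt ℝ u t)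
    (hu' : DifferentiableAt ℝ (deriv u) t) (h0 : u t ≠ 0)
    (hΦ : HasDerivAt Φ (‖u t‖ * F ‖u t‖) ‖u t‖)
    (heq : deriv (deriv u) t + F ‖u t‖ • u t + ν • deriv u t = κ • perp (u t)) :
    HasDerivAt (modifiedEnergy Φ ν κ u) (-(‖ν • deriv u t - κ • perp (u t)‖ ^ 2 / ν)) t := by
  have hdu := hu.hasDerivAt
  have hdu' := hu'.hasDerivAt
  have h := ((hdu'.norm_sq.div_const 2).add (hΦ.comp t (hdu.norm h0))).sub
    ((hdu.perp.inner ℝ hdu').const_mul (κ / ν))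
  refine (h : HasDerivAt (modifiedEnergy Φ ν κ u) _ t).congr_deriv ?_
  have hu'' : deriv (deriv u) t = κ • perp (u t) - F ‖u t‖ • u t - ν • deriv u t := by
    rw [← heq]; abel
  have hn : ‖u t‖ ≠ 0 := norm_ne_zero_iff.2 h0
  rw [hu'', inner_perp_self, norm_sub_sq_real]
  simp only [inner_sub_right, real_inner_smul_left, real_inner_smul_right, norm_smul,
    Real.norm_eq_abs, mul_pow, sq_abs, norm_perp,
    inner_perp_self, real_inner_self_eq_norm_sq, real_inner_comm (deriv u t)]
  field_simp
  ring

lemma antitoneOn_modifiedEnergy (hν : 0 < ν) (hu : Differentiable ℝ u)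
    (hu' : Differentiable ℝ (deriv u)) (h0 : ∀ t, 0 ≤ t → u t ≠ 0)
    (hΦ : ∀ r, 0 < r → HasDerivAt Φ (r * F r) r)
    (heq : ∀ t, 0 ≤ t → deriv (deriv u) t + F ‖u t‖ • u t + ν • deriv u t = κ • perp (u t)) :
    AntitoneOn (modifiedEnergy Φ ν κ u) (Ici 0) := by
  have hE : ∀ t ∈ Ici (0 : ℝ), HasDerivAt (modifiedEnergy Φ ν κ u)
      (-(‖ν • deriv u t - κ • perp (u t)‖ ^ 2 / ν)) t := fun t ht =>
    hasDerivAt_modifiedEnergy hν.ne' (hu t) (hu' t) (h0 t ht)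
      (hΦ _ (norm_pos_iff.2 (h0 t ht))) (heq t ht)
  exact antitoneOn_of_hasDerivWithinAt_nonpos (convex_Ici 0)
    (fun t ht => (hE t ht).continuousAt.continuousWithinAt)
    (fun t ht => (hE t (interior_subset ht)).hasDerivWithinAt)
    fun t _ => neg_nonpos.2 (by positivity)

lemma le_modifiedEnergy {θ : ℝ} (hθ : 0 < θ) (t : ℝ) :
    (1 - θ) / 2 * ‖deriv u t‖ ^ 2 + (Φ ‖u t‖ - κ ^ 2 / (2 * θ * ν ^ 2) * ‖u t‖ ^ 2) ≤
      modifiedEnergy Φ ν κ u t := by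
  have h := real_inner_le_young (deriv u t) ((κ / ν) • perp (u t)) hθ
  rw [real_inner_smul_right, real_inner_comm, norm_smul, norm_perp, Real.norm_eq_abs, mul_pow,
    sq_abs] at h
  have hc : (κ / ν) ^ 2 * ‖u t‖ ^ 2 / (2 * θ) = κ ^ 2 / (2 * θ * ν ^ 2) * ‖u t‖ ^ 2 := by ring
  rw [modifiedEnergy]
  linarith

end

lemma exists_pos_lt_one_sq_div_lt {a b : ℝ} (h : |a| < b) :
    ∃ θ, 0 < θ ∧ θ < 1 ∧ a ^ 2 / θ < b ^ 2 := by
  have hb : 0 < b := (abs_nonneg a).trans_lt h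
  have hab : a ^ 2 / b ^ 2 < 1 := by
    rw [div_lt_one (by positivity), ← sq_abs]
    exact pow_lt_pow_left₀ h (abs_nonneg a) two_ne_zero
  obtain ⟨θ, hθ, hθ1⟩ := exists_between hab
  have hθ0 : 0 < θ := (div_nonneg (sq_nonneg a) (sq_nonneg b)).trans_lt hθ
  refine ⟨θ, hθ0, hθ1, ?_⟩
  rwa [div_lt_iff₀ (by positivity), mul_comm, ← div_lt_iff₀ hθ0] at hθ

lemma exists_sublevel_subset_Icc {Q : ℝ → ℝ} (hQ₀ : Tendsto Q (𝓝[>] 0) atTop)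
    (hQ : Tendsto Q atTop atTop) (K : ℝ) :
    ∃ a b, 0 < a ∧ ∀ r, 0 < r → Q r ≤ K → a ≤ r ∧ r ≤ b := by
  obtain ⟨a, ha, hQa⟩ := (nhdsGT_basis 0).eventually_iff.1 (hQ₀.eventually_gt_atTop K)
  obtain ⟨b, hQb⟩ := eventually_atTop.1 (hQ.eventually_gt_atTop K)
  refine ⟨a, b, ha, fun r hr hQr => ⟨?_, ?_⟩⟩
  · by_contra! h
    exact (hQa ⟨hr, h⟩).not_ge hQr
  · by_contra! h
    exact (hQb r h.le).not_ge hQr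

lemma exists_bounds_of_coercive_energy {Q x v : ℝ → ℝ} {δ K : ℝ} (hQc : ContinuousOn Q (Ioi 0))
    (hQ₀ : Tendsto Q (𝓝[>] 0) atTop) (hQ : Tendsto Q atTop atTop) (hδ : 0 < δ)
    (hx : ∀ t, 0 ≤ t → 0 < x t) (hE : ∀ t, 0 ≤ t → δ * v t ^ 2 + Q (x t) ≤ K) :
    (∃ c C, 0 < c ∧ c ≤ C ∧ ∀ t, 0 ≤ t → c ≤ x t ∧ x t ≤ C) ∧
      ∃ V, ∀ t, 0 ≤ t → |v t| ≤ V := by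
  have hQK : ∀ t, 0 ≤ t → Q (x t) ≤ K := fun t ht =>
    le_of_add_le_of_nonneg_right (hE t ht) (by positivity)
  obtain ⟨a, b, ha, hsub⟩ := exists_sublevel_subset_Icc hQ₀ hQ K
  have hxab : ∀ t, 0 ≤ t → a ≤ x t ∧ x t ≤ b := fun t ht => hsub _ (hx t ht) (hQK t ht)
  have hab : a ≤ b := (hxab 0 le_rfl).1.trans (hxab 0 le_rfl).2
  obtain ⟨r, -, hmin⟩ := isCompact_Icc.exists_isMinOn (nonempty_Icc.2 hab)
    (hQc.mono fun s hs => ha.trans_le hs.1)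
  refine ⟨⟨a, b, ha, hab, hxab⟩, √((K - Q r) / δ), fun t ht => Real.abs_le_sqrt ?_⟩
  rw [le_div_iff₀ hδ]
  linarith [hE t ht, isMinOn_iff.1 hmin _ (hxab t ht)]

theorem relative_distance_uniformly_bounded_constant_controls_general
    (fd fe : ℝ → ℝ) (rp γm : ℝ) (hrp : 0 < rp) (hγm : 0 < γm)
    (hfd_lip : LocallyLipschitzOn (Set.Ioi (0:ℝ)) fd)
    (hfe_lip : LocallyLipschitzOn (Set.Ioi (0:ℝ)) fe)
    (hfd_bdd : ∃ C : ℝ, ∀ r : ℝ, 0 < r → fd r ≤ C)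
    (hfd_lim : Filter.Tendsto fd Filter.atTop (nhds γm))
    (hfe_nonneg : ∀ r : ℝ, 0 < r → 0 ≤ fe r)
    (hfe_div : ¬ MeasureTheory.IntegrableOn (fun r => r * fe r) (Set.Ioc 0 rp))
    (hfe_lim : Filter.Tendsto fe Filter.atTop (nhds 0))
    (ν : ℝ) (hν : 0 < ν) (κp κc : ℝ)
    (hκp : 0 < κp) (hκc : |κc| < ν * Real.sqrt (κp * γm))
    (u : ℝ → EuclideanSpace ℝ (Fin 2)) (hu : ContDiff ℝ 2 u)
    (hsol : ∀ t : ℝ, 0 ≤ t → SolvesRel fd fe ν (fun _ => κp) (fun _ => κc) u t)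
    (hne : ∀ t : ℝ, 0 ≤ t → u t ≠ 0) :
    (∃ c C : ℝ, 0 < c ∧ c ≤ C ∧ ∀ t : ℝ, 0 ≤ t → c ≤ ‖u t‖ ∧ ‖u t‖ ≤ C) ∧
    (∃ V : ℝ, ∀ t : ℝ, 0 ≤ t → ‖deriv u t‖ ≤ V) := by
  obtain ⟨Cd, hCd⟩ := hfd_bdd
  have hκpfd : ContinuousOn (fun r => κp * fd r) (Ioi 0) :=
    continuousOn_const.mul hfd_lip.continuousOn
  have hF : ContinuousOn (fun r => κp * fd r - fe r) (Ioi 0) := hκpfd.sub hfe_lip.continuousOn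
  set Φ := radialPotential (fun r => κp * fd r - fe r) rp
  have hΦ (r : ℝ) (hr : 0 < r) : HasDerivAt Φ (r * (κp * fd r - fe r)) r :=
    hasDerivAt_radialPotential hF hrp hr
  obtain ⟨θ, hθ, hθ1, hθκ⟩ := exists_pos_lt_one_sq_div_lt hκc
  set c := κc ^ 2 / (2 * θ * ν ^ 2)
  have hc : 2 * c < κp * γm := by
    rw [show 2 * c = κc ^ 2 / θ / ν ^ 2 by simp only [c]; field_simp, div_lt_iff₀ (by positivity)]
    rwa [mul_pow, Real.sq_sqrt (by positivity), mul_comm] at hθκ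
  have hE (t : ℝ) (ht : 0 ≤ t) : (1 - θ) / 2 * ‖deriv u t‖ ^ 2 + (Φ ‖u t‖ - c * ‖u t‖ ^ 2) ≤
      modifiedEnergy Φ ν κc u 0 :=
    (le_modifiedEnergy hθ t).trans (antitoneOn_modifiedEnergy hν (hu.differentiable two_ne_zero)
      hu.differentiable_deriv_two hne hΦ hsol self_mem_Ici ht ht)
  obtain ⟨hbounds, V, hV⟩ := exists_bounds_of_coercive_energy (Q := fun r => Φ r - c * r ^ 2)
    (fun r hr => ((hΦ r hr).continuousAt.sub (by fun_prop)).continuousWithinAt)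
    (tendsto_radialPotential_sub_nhdsGT_zero c hrp hκpfd
      (fun s hs => mul_le_mul_of_nonneg_left (hCd s hs.1) hκp.le) hfe_lip.continuousOn
      (fun s hs => hfe_nonneg s hs.1) hfe_div)
    (tendsto_radialPotential_sub_atTop hF hrp
      (by simpa using (hfd_lim.const_mul κp).sub hfe_lim) hc)
    (by linarith) (fun t ht => norm_pos_iff.2 (hne t ht)) hE
  exact ⟨hbounds, V, fun t ht => by simpa using hV t ht⟩

/-- With constant controls `κᵖ > 0` and `|κᶜ| < ν √(κᵖ γ_m)`, the relative
distance `|u(t)|` is uniformly bounded above and below for all `t ≥ 0`, and the relative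
velocity `|u'(t)|` is uniformly bounded in time. -/
theorem relative_distance_uniformly_bounded_constant_controls
    (fd fe : ℝ → ℝ) (rp γm : ℝ) (hrp : 0 < rp) (hγm : 0 < γm)
    (hfd_lip : LocallyLipschitzOn (Set.Ioi (0:ℝ)) fd)
    (hfe_lip : LocallyLipschitzOn (Set.Ioi (0:ℝ)) fe)
    (hf_neg : ∀ r : ℝ, 0 < r → r < rp → fd r - fe r < 0)
    (hf_nonneg : ∀ r : ℝ, rp ≤ r → 0 ≤ fd r - fe r)
    (hf_deriv : 0 < deriv (fun r => fd r - fe r) rp)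
    (hfd_nonneg : ∀ r : ℝ, 0 < r → 0 ≤ fd r)
    (hfd_bdd : ∃ C : ℝ, ∀ r : ℝ, 0 < r → fd r ≤ C)
    (hfd_lim : Filter.Tendsto fd Filter.atTop (nhds γm))
    (hfe_nonneg : ∀ r : ℝ, 0 < r → 0 ≤ fe r)
    (hfe_div : ¬ MeasureTheory.IntegrableOn (fun r => r * fe r) (Set.Ioc 0 rp))
    (hfe_lim : Filter.Tendsto fe Filter.atTop (nhds 0))
    (ν : ℝ) (hν : 0 < ν) (κp κc : ℝ)
    (hκp : 0 < κp) (hκc : |κc| < ν * Real.sqrt (κp * γm))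
    (u : ℝ → EuclideanSpace ℝ (Fin 2)) (hu : ContDiff ℝ 2 u)
    (hsol : ∀ t : ℝ, 0 ≤ t → SolvesRel fd fe ν (fun _ => κp) (fun _ => κc) u t)
    (hne : ∀ t : ℝ, 0 ≤ t → u t ≠ 0) :
    (∃ c C : ℝ, 0 < c ∧ c ≤ C ∧ ∀ t : ℝ, 0 ≤ t → c ≤ ‖u t‖ ∧ ‖u t‖ ≤ C) ∧
    (∃ V : ℝ, ∀ t : ℝ, 0 ≤ t → ‖deriv u t‖ ≤ V) :=
  relative_distance_uniformly_bounded_constant_controls_general fd fe rp γm hrp hγm hfd_lip hfe_lip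
    hfd_bdd hfd_lim hfe_nonneg hfe_div hfe_lim ν hν κp κc hκp hκc u hu hsol hne
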